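/- Let E be a finite-dimensional real inner product space and K ≥ 1. Let z : E → EuclideanSpace ℝ (Fin K) be differentiable at θ with operator norm ‖Dz(θ)‖ ≤ M, let q be a probability vector on Fin K, and define the training loss ℓ(ψ) = CE(q‖softmax(z(ψ))). Let f : E → ℝ be twice continuously differentiable with ‖∇f(ψ)‖ ≤ G and ‖∇²f(ψ)‖ ≤ H for all ψ ∈ E. Then for every η ≥ 0, setting θ' = θ − η·∇ℓ(θ), one has |f(θ') − f(θ)| ≤ √2·η·G·M·√(ℓ(θ)) + η²·H·M²·ℓ(θ). -/

import Mathlib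

/-- `softmax(z)_i = exp(z_i) / ∑_j exp(z_j)`. -/
noncomputable def softmax {K : ℕ} (z : EuclideanSpace ℝ (Fin K)) : Fin K → ℝ :=
  fun i => Real.exp (z i) / ∑ j, Real.exp (z j)

/-- Cross-entropy `CE(q‖p) = −∑_i q_i·log p_i`. -/
noncomputable def crossEntropy {K : ℕ} (q p : Fin K → ℝ) : ℝ :=
  -∑ i, q i * Real.log (p i)

/-!
On logits `w` the loss is `log ∑ⱼ exp wⱼ − ⟪q, w⟫`, whose gradient is `softmax w − q`. The
second-order bound `−log y ≥ (1 − y) + (1 − y)²/2` on `(0, 1]` gives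
`‖softmax w − q‖² ≤ 2·CE(q‖softmax w)`, so by the chain rule `‖∇ℓ(θ)‖ ≤ M·√(2ℓ(θ))`. Taylor's
formula with integral remainder bounds the change of `f` along a step `δ` by
`G‖δ‖ + H/2·‖δ‖²`; take `δ = −η∇ℓ(θ)`.
-/

open Real

theorem one_sub_add_sq_div_two_le_neg_log {y : ℝ} (hy0 : 0 < y) (hy1 : y ≤ 1) :
    (1 - y) + (1 - y) ^ 2 / 2 ≤ -log y := by
  have hlog := hasSum_pow_div_log_of_abs_lt_one (x := 1 - y)
    (by rw [abs_lt]; constructor <;> linarith)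
  rw [sub_sub_cancel] at hlog
  have := sum_le_hasSum (Finset.range 2) (fun n _ => by positivity) hlog
  norm_num [Finset.sum_range_succ] at this
  exact this

theorem sub_add_sq_div_two_le_neg_mul_log {x y : ℝ} (hx0 : 0 ≤ x) (hx1 : x ≤ 1)
    (hy0 : 0 < y) (hy1 : y ≤ 1) :
    x - y + (x - y) ^ 2 / 2 ≤ -(x * log y) := by
  -- `x * ((1 - y) + (1 - y) ^ 2 / 2)` exceeds the left side by `(1 - x) * (x + y * (2 - y)) / 2`.
  have hgap : 0 ≤ (1 - x) * (x + y * (2 - y)) := by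
    apply mul_nonneg <;> nlinarith
  calc x - y + (x - y) ^ 2 / 2 ≤ x * ((1 - y) + (1 - y) ^ 2 / 2) := by nlinarith
    _ ≤ x * -log y := mul_le_mul_of_nonneg_left (one_sub_add_sq_div_two_le_neg_log hy0 hy1) hx0
    _ = -(x * log y) := by ring

theorem sum_sq_sub_le_two_mul_crossEntropy {K : ℕ} {q p : Fin K → ℝ} (hq0 : ∀ i, 0 ≤ q i)
    (hq1 : ∑ i, q i = 1) (hp0 : ∀ i, 0 < p i) (hp1 : ∑ i, p i = 1) :
    ∑ i, (q i - p i) ^ 2 ≤ 2 * crossEntropy q p := by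
  have hle_one {r : Fin K → ℝ} (hr0 : ∀ i, 0 ≤ r i) (hr1 : ∑ i, r i = 1) (i : Fin K) : r i ≤ 1 :=
    hr1 ▸ Finset.single_le_sum (fun j _ => hr0 j) (Finset.mem_univ i)
  have hterm := Finset.sum_le_sum fun i (_ : i ∈ Finset.univ) =>
    sub_add_sq_div_two_le_neg_mul_log (hq0 i) (hle_one hq0 hq1 i) (hp0 i)
      (hle_one (fun j => (hp0 j).le) hp1 i)
  simp only [Finset.sum_add_distrib, Finset.sum_sub_distrib, Finset.sum_neg_distrib, hq1, hp1,
    ← Finset.sum_div] at hterm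
  rw [crossEntropy]
  linarith

section Softmax

variable {K : ℕ} [NeZero K] {q : Fin K → ℝ}

theorem sum_exp_pos (w : EuclideanSpace ℝ (Fin K)) : 0 < ∑ j, exp (w j) :=
  Finset.sum_pos (fun _ _ => exp_pos _) Finset.univ_nonempty

theorem softmax_pos (w : EuclideanSpace ℝ (Fin K)) (i : Fin K) : 0 < softmax w i :=
  div_pos (exp_pos _) (sum_exp_pos w)

theorem sum_softmax (w : EuclideanSpace ℝ (Fin K)) : ∑ i, softmax w i = 1 := by
  simp only [softmax, ← Finset.sum_div, div_self (sum_exp_pos w).ne']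

theorem crossEntropy_softmax (hq1 : ∑ i, q i = 1) (w : EuclideanSpace ℝ (Fin K)) :
    crossEntropy q (softmax w) = log (∑ j, exp (w j)) - ∑ i, q i * w i := by
  simp only [crossEntropy, softmax, log_div (exp_ne_zero _) (sum_exp_pos w).ne', log_exp, mul_sub,
    Finset.sum_sub_distrib, ← Finset.sum_mul, hq1]
  ring

theorem hasFDerivAt_crossEntropy_softmax (hq1 : ∑ i, q i = 1)
    (w : EuclideanSpace ℝ (Fin K)) :
    HasFDerivAt (fun w => crossEntropy q (softmax w))
      (innerSL ℝ (WithLp.toLp 2 (softmax w - q) : EuclideanSpace ℝ (Fin K))) w := by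
  have hproj (j : Fin K) := PiLp.hasFDerivAt_apply (𝕜 := ℝ) 2 w j
  have hlse := (HasFDerivAt.fun_sum fun j _ => (hproj j).exp).log (sum_exp_pos w).ne'
  have hlin := HasFDerivAt.fun_sum fun i (_ : i ∈ Finset.univ) => (hproj i).const_mul (q i)
  rw [funext (crossEntropy_softmax hq1)]
  refine (hlse.sub hlin).congr_fderiv ?_
  ext v
  simp only [sub_apply, smul_apply, sum_apply, PiLp.proj_apply, smul_eq_mul, Finset.mul_sum,
    WithLp.toLp_sub, map_sub, coe_innerSL_apply, PiLp.inner_apply, softmax, div_eq_inv_mul,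
    RCLike.inner_apply, conj_trivial]
  congr 1 <;> exact Finset.sum_congr rfl fun i _ => by ring

theorem norm_sq_toLp_softmax_sub_le (hq0 : ∀ i, 0 ≤ q i) (hq1 : ∑ i, q i = 1)
    (w : EuclideanSpace ℝ (Fin K)) :
    ‖(WithLp.toLp 2 (softmax w - q) : EuclideanSpace ℝ (Fin K))‖ ^ 2 ≤
      2 * crossEntropy q (softmax w) := by
  have h := sum_sq_sub_le_two_mul_crossEntropy hq0 hq1 (softmax_pos w) (sum_softmax w)
  rw [EuclideanSpace.norm_sq_eq]
  convert h using 2 with i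
  simp only [Real.norm_eq_abs, sq_abs, Pi.sub_apply]
  ring

end Softmax

theorem norm_gradient_eq_norm_fderiv {𝕜 F : Type*} [RCLike 𝕜] [NormedAddCommGroup F]
    [InnerProductSpace 𝕜 F] [CompleteSpace F] (f : F → 𝕜) (x : F) :
    ‖gradient f x‖ = ‖fderiv 𝕜 f x‖ := by
  rw [← toDual_gradient, LinearIsometryEquiv.norm_map]

theorem norm_sub_sub_fderiv_le_of_norm_fderiv_fderiv_le {E F : Type*} [NormedAddCommGroup E]
    [NormedSpace ℝ E] [NormedAddCommGroup F] [NormedSpace ℝ F] [CompleteSpace F] {f : E → F}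
    {H : ℝ} (hf : ContDiff ℝ 2 f) (hH : ∀ x, ‖fderiv ℝ (fderiv ℝ f) x‖ ≤ H) (x y : E) :
    ‖f (x + y) - f x - fderiv ℝ f x y‖ ≤ H / 2 * ‖y‖ ^ 2 := by
  have htaylor := map_add_eq_sum_add_integral_iteratedFDeriv (n := 1) (x := x) (y := y)
    fun t _ => hf.contDiffAt
  simp only [Finset.sum_range_succ, Finset.sum_range_zero, zero_add, Nat.factorial_zero,
    Nat.factorial_one, Nat.cast_one, inv_one, one_smul, pow_one, iteratedFDeriv_zero_apply,
    iteratedFDeriv_one_apply, Nat.reduceAdd] at htaylor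
  rw [htaylor, add_assoc, add_sub_cancel_left, add_sub_cancel_left]
  have hbound : ∀ t ∈ Set.Ioc (0 : ℝ) 1,
      ‖(1 - t) • iteratedFDeriv ℝ 2 f (x + t • y) (fun _ => y)‖ ≤ (1 - t) * (H * ‖y‖ ^ 2) := by
    intro t ht
    have h1t : 0 ≤ 1 - t := sub_nonneg.2 ht.2
    calc ‖(1 - t) • iteratedFDeriv ℝ 2 f (x + t • y) (fun _ => y)‖
        = (1 - t) * ‖iteratedFDeriv ℝ 2 f (x + t • y) (fun _ => y)‖ := by
          rw [norm_smul, Real.norm_of_nonneg h1t]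
      _ ≤ (1 - t) * (‖iteratedFDeriv ℝ 2 f (x + t • y)‖ * ∏ _ : Fin 2, ‖y‖) := by
          gcongr
          exact ContinuousMultilinearMap.le_opNorm _ _
      _ ≤ (1 - t) * (H * ‖y‖ ^ 2) := by
          rw [Finset.prod_const, Finset.card_univ, Fintype.card_fin,
            ← norm_iteratedFDeriv_fderiv (n := 1), norm_iteratedFDeriv_one]
          gcongr
          exact hH _
  calc _ ≤ ∫ t in (0 : ℝ)..1, (1 - t) * (H * ‖y‖ ^ 2) :=
        intervalIntegral.norm_integral_le_of_norm_le zero_le_one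
          (MeasureTheory.ae_of_all _ hbound) (Continuous.intervalIntegrable (by fun_prop) _ _)
    _ = H / 2 * ‖y‖ ^ 2 := by
        rw [intervalIntegral.integral_mul_const, intervalIntegral.integral_sub
          intervalIntegrable_const intervalIntegral.intervalIntegrable_id, integral_id,
          intervalIntegral.integral_const]
        norm_num
        ring

theorem abs_sub_le_of_norm_gradient_le_of_norm_fderiv_fderiv_le {E : Type*}
    [NormedAddCommGroup E] [InnerProductSpace ℝ E] [CompleteSpace E] {f : E → ℝ} {G H : ℝ}
    (hf : ContDiff ℝ 2 f) (hG : ∀ x, ‖gradient f x‖ ≤ G)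
    (hH : ∀ x, ‖fderiv ℝ (fderiv ℝ f) x‖ ≤ H) (x y : E) :
    |f (x + y) - f x| ≤ G * ‖y‖ + H / 2 * ‖y‖ ^ 2 := by
  have hlin : |fderiv ℝ f x y| ≤ G * ‖y‖ := by
    calc |fderiv ℝ f x y| ≤ ‖fderiv ℝ f x‖ * ‖y‖ := (fderiv ℝ f x).le_opNorm y
      _ ≤ G * ‖y‖ := by
          rw [← norm_gradient_eq_norm_fderiv]
          gcongr
          exact hG x
  have hrem := norm_sub_sub_fderiv_le_of_norm_fderiv_fderiv_le hf hH x y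
  rw [Real.norm_eq_abs] at hrem
  calc |f (x + y) - f x| = |(f (x + y) - f x - fderiv ℝ f x y) + fderiv ℝ f x y| := by
        rw [sub_add_cancel]
    _ ≤ |f (x + y) - f x - fderiv ℝ f x y| + |fderiv ℝ f x y| := abs_add_le _ _
    _ ≤ G * ‖y‖ + H / 2 * ‖y‖ ^ 2 := by linarith

theorem norm_gradient_crossEntropy_softmax_comp_le {E : Type*} [NormedAddCommGroup E]
    [InnerProductSpace ℝ E] [CompleteSpace E] {K : ℕ} [NeZero K]
    {z : E → EuclideanSpace ℝ (Fin K)} {θ : E} (hz : DifferentiableAt ℝ z θ) {q : Fin K → ℝ}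
    (hq0 : ∀ i, 0 ≤ q i) (hq1 : ∑ i, q i = 1) :
    ‖gradient (fun ψ => crossEntropy q (softmax (z ψ))) θ‖ ≤
      √(2 * crossEntropy q (softmax (z θ))) * ‖fderiv ℝ z θ‖ := by
  have hℓ : HasFDerivAt (fun ψ => crossEntropy q (softmax (z ψ)))
      ((innerSL ℝ (WithLp.toLp 2 (softmax (z θ) - q) : EuclideanSpace ℝ (Fin K))).comp
        (fderiv ℝ z θ)) θ :=
    (hasFDerivAt_crossEntropy_softmax hq1 (z θ)).comp θ hz.hasFDerivAt
  rw [norm_gradient_eq_norm_fderiv, hℓ.fderiv]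
  refine (ContinuousLinearMap.opNorm_comp_le _ _).trans ?_
  rw [innerSL_apply_norm]
  gcongr
  exact (le_abs_self _).trans (abs_le_sqrt (norm_sq_toLp_softmax_sub_le hq0 hq1 (z θ)))

theorem per_step_forgetting_bound_softmax_general
    {E : Type*} [NormedAddCommGroup E] [InnerProductSpace ℝ E] [FiniteDimensional ℝ E]
    {K : ℕ}
    (z : E → EuclideanSpace ℝ (Fin K)) (θ : E) (M : ℝ)
    (hz : DifferentiableAt ℝ z θ) (hDz : ‖fderiv ℝ z θ‖ ≤ M)
    (q : Fin K → ℝ) (hq0 : ∀ i, 0 ≤ q i) (hq1 : ∑ i, q i = 1)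
    (ℓ : E → ℝ) (hℓ : ℓ = fun ψ => crossEntropy q (softmax (z ψ)))
    (f : E → ℝ) (G H : ℝ)
    (hf : ContDiff ℝ 2 f)
    (hfgrad : ∀ ψ : E, ‖gradient f ψ‖ ≤ G)
    (hfhess : ∀ ψ : E, ‖fderiv ℝ (fderiv ℝ f) ψ‖ ≤ H)
    (η : ℝ) (hη : 0 ≤ η) :
    |f (θ - η • gradient ℓ θ) - f θ| ≤
      Real.sqrt 2 * η * G * M * Real.sqrt (ℓ θ) + η ^ 2 * H * M ^ 2 * ℓ θ := by
  have : NeZero K := ⟨by rintro rfl; simp at hq1⟩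
  have hℓθ : 0 ≤ ℓ θ := by
    rw [hℓ]
    nlinarith [norm_sq_toLp_softmax_sub_le hq0 hq1 (z θ)]
  have hG : 0 ≤ G := (norm_nonneg _).trans (hfgrad θ)
  have hH : 0 ≤ H := (norm_nonneg (fderiv ℝ (fderiv ℝ f) θ)).trans (hfhess θ)
  have hgrad : ‖gradient ℓ θ‖ ≤ √2 * √(ℓ θ) * M := by
    rw [← sqrt_mul zero_le_two, hℓ]
    exact (norm_gradient_crossEntropy_softmax_comp_le hz hq0 hq1).trans (by gcongr)
  have hstep := abs_sub_le_of_norm_gradient_le_of_norm_fderiv_fderiv_le hf hfgrad hfhess θ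
    (-(η • gradient ℓ θ))
  rw [← sub_eq_add_neg, norm_neg, norm_smul, Real.norm_of_nonneg hη] at hstep
  calc _ ≤ G * (η * ‖gradient ℓ θ‖) + H / 2 * (η * ‖gradient ℓ θ‖) ^ 2 := hstep
    _ ≤ G * (η * (√2 * √(ℓ θ) * M)) + H / 2 * (η * (√2 * √(ℓ θ) * M)) ^ 2 := by gcongr
    _ = √2 * η * G * M * √(ℓ θ) + η ^ 2 * H * M ^ 2 * ℓ θ := by
        rw [mul_pow, mul_pow, mul_pow, sq_sqrt zero_le_two, sq_sqrt hℓθ]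
        ring

/-- **Per-step forgetting bound (Theorem 1, single training example).**
For the softmax cross-entropy loss `ℓ(ψ) = CE(q ‖ softmax(z(ψ)))` with logit Jacobian
bounded by `M`, and `f` a `C²` function with gradient bounded by `G` and Hessian
operator norm bounded by `H`, one SGD step `θ' = θ − η·∇ℓ(θ)` satisfies
`|f(θ') − f(θ)| ≤ √2·η·G·M·√(ℓ(θ)) + η²·H·M²·ℓ(θ)`. -/
theorem per_step_forgetting_bound_softmax
    {E : Type*} [NormedAddCommGroup E] [InnerProductSpace ℝ E] [FiniteDimensional ℝ E]
    {K : ℕ} (hK : 1 ≤ K)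
    (z : E → EuclideanSpace ℝ (Fin K)) (θ : E) (M : ℝ) (hM : 0 ≤ M)
    (hz : DifferentiableAt ℝ z θ) (hDz : ‖fderiv ℝ z θ‖ ≤ M)
    (q : Fin K → ℝ) (hq0 : ∀ i, 0 ≤ q i) (hq1 : ∑ i, q i = 1)
    (ℓ : E → ℝ) (hℓ : ℓ = fun ψ => crossEntropy q (softmax (z ψ)))
    (f : E → ℝ) (G H : ℝ) (hG : 0 ≤ G) (hH : 0 ≤ H)
    (hf : ContDiff ℝ 2 f)
    (hfgrad : ∀ ψ : E, ‖gradient f ψ‖ ≤ G)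
    (hfhess : ∀ ψ : E, ‖fderiv ℝ (fderiv ℝ f) ψ‖ ≤ H)
    (η : ℝ) (hη : 0 ≤ η) :
    |f (θ - η • gradient ℓ θ) - f θ| ≤
      Real.sqrt 2 * η * G * M * Real.sqrt (ℓ θ) + η ^ 2 * H * M ^ 2 * ℓ θ :=
  per_step_forgetting_bound_softmax_general z θ M hz hDz q hq0 hq1 ℓ hℓ f G H hf hfgrad hfhess η hη
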